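/- arXiv:math/9908157 — 2 statements merged into one kernel-verified Lean document; each statement's English description precedes it below -/
import Mathlib

section
/- The poset Q₀ satisfies the countable chain condition: for every uncountable subset {q_ν : ν < ω₁} of Q₀ there exist ν ≠ μ such that q_ν and q_μ have a common extension in Q₀ (equivalently, q_ν ∪ q_μ is a condition). -/
open scoped Ordinal

noncomputable section

/-- The points of `ω₁`, i.e. the countable ordinals. -/
abbrev Idx : Type 1 := {ν : Ordinal // ν < ω₁}

/-- The free abelian group `F'` with basis `{x_ν : ν < ω₁}`. -/
abbrev Fgrp' : Type 1 := FreeAbelianGroup Idx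

/-- The basis element `x_ν` of `F'`. -/
def xg' (ν : Idx) : Fgrp' := FreeAbelianGroup.of ν

/-- The raw data of a condition in `Q₀`: a finite set `D ⊆ E` of ordinals, and for each
`γ ∈ D` a natural number `r γ` together with the finite sequences
`η γ : {0,...,r γ − 1} → Ordinal`, `u γ` and `g γ` (recorded as total functions, of which
only the values at `γ ∈ D`, `n < r γ` are relevant). -/
structure PreCond0 (E : Set Ordinal) where
  D : Finset ↥E
  r : ↥E → ℕ
  η : ↥E → ℕ → Ordinal
  u : ↥E → ℕ → Fgrp'
  g : ↥E → ℕ → ℤ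

/-- Membership in the poset `Q₀`: for each `γ ∈ D`, `η γ` is a strictly increasing finite
sequence of length `r γ` with values `< γ`, each `u γ n` lies in the subgroup generated by
`{x_ν : ν < η γ n}`, and each `g γ n` is an integer `≥ 1`. -/
def IsCond0 {E : Set Ordinal} (q : PreCond0 E) : Prop :=
  ∀ γ ∈ q.D,
    (∀ n < q.r γ, q.η γ n < (γ : Ordinal)) ∧
    (∀ m n : ℕ, m < n → n < q.r γ → q.η γ m < q.η γ n) ∧
    (∀ n < q.r γ, q.u γ n ∈
      AddSubgroup.closure {y : Fgrp' | ∃ ν : Idx, (ν : Ordinal) < q.η γ n ∧ y = xg' ν}) ∧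
    (∀ n < q.r γ, 1 ≤ q.g γ n)

/-- `q` extends `p` in `Q₀`: `dom p ⊆ dom q` and, for `γ ∈ dom p`, the triple `q(γ)`
extends the triple `p(γ)` componentwise. -/
def Extends0 {E : Set Ordinal} (p q : PreCond0 E) : Prop :=
  p.D ⊆ q.D ∧ ∀ γ ∈ p.D, p.r γ ≤ q.r γ ∧
    ∀ n < p.r γ, p.η γ n = q.η γ n ∧ p.u γ n = q.u γ n ∧ p.g γ n = q.g γ n

/-!
The value of a condition at `γ ∈ E` is a finite sequence of triples drawn from a countable set,
because `γ < ω₁`: `η` takes values below `γ`, and `u` lies in the subgroup generated by the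
countably many `x_ν` with `ν < γ`. Two conditions whose values agree on their common domain have
their union as a common extension. So it suffices to find, in an uncountable family of finitely
supported functions with countably many values at each point, two members agreeing on their
common support. This weak Δ-system lemma goes by induction on the size of the supports: if some
point lies in uncountably many supports, fix a value taken there uncountably often and delete the
point from the supports; otherwise any member is disjoint from all but countably many others.
-/

theorem Set.exists_not_countable_fiber {α β : Type*} {s : Set α} {f : α → β}
    (hs : ¬ s.Countable) (hf : (f '' s).Countable) : ∃ b, ¬ {a ∈ s | f a = b}.Countable := by
  by_contra! h
  refine hs <| (hf.biUnion fun b _ => h b).mono fun a ha => ?_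
  exact Set.mem_biUnion (Set.mem_image_of_mem f ha) (show a ∈ {a' ∈ s | f a' = f a} from ⟨ha, rfl⟩)

theorem Set.Countable.setOf_list_forall_mem {α : Type*} {s : Set α} (hs : s.Countable) :
    {l : List α | ∀ x ∈ l, x ∈ s}.Countable := by
  have := hs.to_subtype
  refine (Set.countable_range fun l : List s => l.map Subtype.val).mono fun l hl => ?_
  exact ⟨l.attach.map fun x => ⟨x.1, hl x.1 x.2⟩, by simp⟩

theorem AddSubgroup.countable_closure {G : Type*} [AddGroup G] {s : Set G} (hs : s.Countable) :
    (AddSubgroup.closure s : Set G).Countable := by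
  have := hs.to_subtype
  rw [FreeAddGroup.closure_eq_range]
  exact Set.countable_range _

theorem Ordinal.countable_Iio_of_lt_omega_one {o : Ordinal} (ho : o < ω₁) :
    (Set.Iio o).Countable := by
  rw [← Cardinal.le_aleph0_iff_set_countable, Cardinal.mk_Iio_ordinal, Cardinal.lift_le_aleph0,
    ← Cardinal.lt_aleph_one_iff, ← Cardinal.lt_ord, Cardinal.ord_aleph]
  exact ho

section FiniteSupport

variable {α ι β : Type*} {S : Set α} {dom : α → Finset ι} {val : α → ι → β}

theorem exists_ne_disjoint_of_countable_mem (hS : ¬ S.Countable)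
    (hdom : ∀ i, {a ∈ S | i ∈ dom a}.Countable) :
    ∃ a ∈ S, ∃ b ∈ S, a ≠ b ∧ Disjoint (dom a) (dom b) := by
  obtain ⟨a, ha⟩ : S.Nonempty :=
    Set.nonempty_iff_ne_empty.2 fun h => hS (h ▸ Set.countable_empty)
  set bad : Set α := insert a (⋃ i ∈ (dom a : Set ι), {b ∈ S | i ∈ dom b})
  have hbad : bad.Countable := ((dom a).countable_toSet.biUnion fun i _ => hdom i).insert a
  obtain ⟨b, hb, hbad_b⟩ := Set.not_subset.1 fun h => hS (hbad.mono h)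
  refine ⟨a, ha, b, hb, fun hab => hbad_b (hab ▸ Set.mem_insert a _), ?_⟩
  exact Finset.disjoint_left.2 fun i hia hib =>
    hbad_b (Set.mem_insert_of_mem a (Set.mem_biUnion hia ⟨hb, hib⟩))

theorem exists_ne_agree_of_card_le
    (hval : ∀ i, ((val · i) '' {a ∈ S | i ∈ dom a}).Countable) (n : ℕ)
    (hcard : ∀ a ∈ S, (dom a).card ≤ n) (hS : ¬ S.Countable) :
    ∃ a ∈ S, ∃ b ∈ S, a ≠ b ∧ ∀ i ∈ dom a, i ∈ dom b → val a i = val b i := by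
  classical
  induction n generalizing S dom with
  | zero =>
    obtain ⟨a, ha, b, hb, hab⟩ := Set.not_subsingleton_iff.1 fun h => hS h.countable
    refine ⟨a, ha, b, hb, hab, fun i hi => absurd hi ?_⟩
    simp [Finset.card_eq_zero.1 (Nat.le_zero.1 (hcard a ha))]
  | succ n ih =>
    by_cases hmem : ∀ i, {a ∈ S | i ∈ dom a}.Countable
    · obtain ⟨a, ha, b, hb, hab, hdisj⟩ := exists_ne_disjoint_of_countable_mem hS hmem
      exact ⟨a, ha, b, hb, hab, fun i hia hib => absurd hib (Finset.disjoint_left.1 hdisj hia)⟩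
    obtain ⟨i, hi⟩ := not_forall.1 hmem
    -- some value at `i` is taken uncountably often; removing `i` from those domains lowers `n`
    obtain ⟨w, hw⟩ := Set.exists_not_countable_fiber hi (hval i)
    set fiber := {a ∈ {a ∈ S | i ∈ dom a} | val a i = w}
    have hval' : ∀ j, ((val · j) '' {a ∈ fiber | j ∈ (dom a).erase i}).Countable := fun j =>
      (hval j).mono <| Set.image_mono fun _ ha =>
        show _ ∧ _ from ⟨ha.1.1.1, Finset.mem_of_mem_erase ha.2⟩
    have hcard' : ∀ a ∈ fiber, ((dom a).erase i).card ≤ n := fun a ha => by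
      have := hcard a ha.1.1
      rw [Finset.card_erase_of_mem ha.1.2]
      omega
    obtain ⟨a, ha, b, hb, hab, hagree⟩ := ih hval' hcard' hw
    refine ⟨a, ha.1.1, b, hb.1.1, hab, fun j hja hjb => ?_⟩
    by_cases hji : j = i
    · subst hji
      exact ha.2.trans hb.2.symm
    · exact hagree j (Finset.mem_erase.2 ⟨hji, hja⟩) (Finset.mem_erase.2 ⟨hji, hjb⟩)

theorem exists_ne_agree (hval : ∀ i, ((val · i) '' {a ∈ S | i ∈ dom a}).Countable)
    (hS : ¬ S.Countable) :
    ∃ a ∈ S, ∃ b ∈ S, a ≠ b ∧ ∀ i ∈ dom a, i ∈ dom b → val a i = val b i := by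
  obtain ⟨n, hn⟩ :=
    Set.exists_not_countable_fiber hS (Set.to_countable ((fun a => (dom a).card) '' S))
  obtain ⟨a, ha, b, hb, hab, hagree⟩ := exists_ne_agree_of_card_le
    (fun i => (hval i).mono (Set.image_mono fun _ ha => show _ ∧ _ from ⟨ha.1.1, ha.2⟩)) n
    (fun a ha => ha.2.le) hn
  exact ⟨a, ha.1, b, hb.1, hab, hagree⟩

end FiniteSupport

namespace PreCond0

variable {E : Set Ordinal}

def trace (q : PreCond0 E) (γ : ↥E) : List (Ordinal × Fgrp' × ℤ) :=
  (List.range (q.r γ)).map fun n => (q.η γ n, q.u γ n, q.g γ n)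

theorem r_eq_and_eq_of_trace_eq {p q : PreCond0 E} {γ : ↥E} (h : p.trace γ = q.trace γ) :
    p.r γ = q.r γ ∧
      ∀ n < p.r γ, p.η γ n = q.η γ n ∧ p.u γ n = q.u γ n ∧ p.g γ n = q.g γ n := by
  have hr : p.r γ = q.r γ := by simpa [trace] using congrArg List.length h
  refine ⟨hr, fun n hn => ?_⟩
  have := congrArg (·[n]?) h
  simpa [trace, List.getElem?_range hn, List.getElem?_range (hr ▸ hn)] using this

theorem extends0_of_trace_eq {p s : PreCond0 E} (hD : p.D ⊆ s.D)
    (h : ∀ γ ∈ p.D, p.trace γ = s.trace γ) : Extends0 p s :=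
  ⟨hD, fun γ hγ =>
    have ⟨hr, hdata⟩ := r_eq_and_eq_of_trace_eq (h γ hγ)
    ⟨hr.le, hdata⟩⟩

theorem isCond0_of_trace_eq {s : PreCond0 E}
    (h : ∀ γ ∈ s.D, ∃ p, IsCond0 p ∧ γ ∈ p.D ∧ p.trace γ = s.trace γ) : IsCond0 s := by
  intro γ hγ
  obtain ⟨p, hp, hγp, htrace⟩ := h γ hγ
  obtain ⟨hr, hdata⟩ := r_eq_and_eq_of_trace_eq htrace
  obtain ⟨hlt, hmono, hu, hg⟩ := hp γ hγp
  rw [← hr]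
  refine ⟨fun n hn => ?_, fun m n hmn hn => ?_, fun n hn => ?_, fun n hn => ?_⟩
  · exact (hdata n hn).1 ▸ hlt n hn
  · rw [← (hdata m (hmn.trans hn)).1, ← (hdata n hn).1]
    exact hmono m n hmn hn
  · rw [← (hdata n hn).1, ← (hdata n hn).2.1]
    exact hu n hn
  · exact (hdata n hn).2.2 ▸ hg n hn

theorem countable_setOf_trace {γ : ↥E} (hγ : (γ : Ordinal) < ω₁) :
    {l | ∃ q : PreCond0 E, IsCond0 q ∧ γ ∈ q.D ∧ q.trace γ = l}.Countable := by
  set gens : Set Fgrp' := {y | ∃ ν : Idx, (ν : Ordinal) < γ ∧ y = xg' ν}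
  have hIio := Ordinal.countable_Iio_of_lt_omega_one hγ
  have hgens : gens.Countable := ((hIio.preimage Subtype.val_injective).image xg').mono <| by
    rintro _ ⟨ν, hν, rfl⟩; exact ⟨ν, hν, rfl⟩
  refine ((hIio.prod ((AddSubgroup.countable_closure hgens).prod Set.countable_univ))
    |>.setOf_list_forall_mem).mono ?_
  rintro _ ⟨q, hq, hγq, rfl⟩ x hx
  obtain ⟨n, hn, rfl⟩ := by simpa [trace] using hx
  obtain ⟨hlt, -, hu, -⟩ := hq γ hγq
  refine ⟨hlt n hn, AddSubgroup.closure_mono ?_ (hu n hn), Set.mem_univ _⟩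
  rintro _ ⟨ν, hν, rfl⟩
  exact ⟨ν, hν.trans (hlt n hn), rfl⟩

def union (p q : PreCond0 E) : PreCond0 E where
  D := p.D ∪ q.D
  r γ := if γ ∈ p.D then p.r γ else q.r γ
  η γ := if γ ∈ p.D then p.η γ else q.η γ
  u γ := if γ ∈ p.D then p.u γ else q.u γ
  g γ := if γ ∈ p.D then p.g γ else q.g γ

theorem trace_union_of_mem {p q : PreCond0 E} {γ : ↥E} (h : γ ∈ p.D) :
    (p.union q).trace γ = p.trace γ := by
  simp [union, trace, h]

theorem trace_union_of_notMem {p q : PreCond0 E} {γ : ↥E} (h : γ ∉ p.D) :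
    (p.union q).trace γ = q.trace γ := by
  simp [union, trace, h]

theorem isCond0_union {p q : PreCond0 E} (hp : IsCond0 p) (hq : IsCond0 q) :
    IsCond0 (p.union q) := by
  refine isCond0_of_trace_eq fun γ hγ => ?_
  by_cases hγp : γ ∈ p.D
  · exact ⟨p, hp, hγp, (trace_union_of_mem hγp).symm⟩
  · exact ⟨q, hq, (Finset.mem_union.1 hγ).resolve_left hγp, (trace_union_of_notMem hγp).symm⟩

theorem extends0_union_left (p q : PreCond0 E) : Extends0 p (p.union q) :=
  extends0_of_trace_eq Finset.subset_union_left fun _ hγ => (trace_union_of_mem hγ).symm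

theorem extends0_union_right {p q : PreCond0 E}
    (h : ∀ γ ∈ p.D, γ ∈ q.D → p.trace γ = q.trace γ) : Extends0 q (p.union q) := by
  refine extends0_of_trace_eq Finset.subset_union_right fun γ hγq => ?_
  by_cases hγp : γ ∈ p.D
  · rw [trace_union_of_mem hγp, h γ hγp hγq]
  · rw [trace_union_of_notMem hγp]

end PreCond0

/-- the poset `Q₀` satisfies the countable chain condition: any uncountable
subset of `Q₀` contains two distinct conditions with a common extension in `Q₀`. -/
theorem stmt10 (E : Set Ordinal) (hE : ∀ δ ∈ E, δ < ω₁ ∧ Order.IsSuccLimit δ) :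
    ∀ T : Set (PreCond0 E), (∀ q ∈ T, IsCond0 q) → ¬ T.Countable →
      ∃ q₁ ∈ T, ∃ q₂ ∈ T, q₁ ≠ q₂ ∧
        ∃ s : PreCond0 E, IsCond0 s ∧ Extends0 q₁ s ∧ Extends0 q₂ s := by
  intro T hT hTc
  have htrace : ∀ γ : ↥E, ((·.trace γ) '' {q ∈ T | γ ∈ q.D}).Countable := fun γ =>
    (PreCond0.countable_setOf_trace (hE γ γ.2).1).mono <| by
      rintro _ ⟨q, ⟨hqT, hγq⟩, rfl⟩; exact ⟨q, hT q hqT, hγq, rfl⟩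
  obtain ⟨q₁, hq₁, q₂, hq₂, hne, hagree⟩ := exists_ne_agree htrace hTc
  exact ⟨q₁, hq₁, q₂, hq₂, hne, q₁.union q₂, PreCond0.isCond0_union (hT q₁ hq₁) (hT q₂ hq₂),
    PreCond0.extends0_union_left q₁ q₂, PreCond0.extends0_union_right hagree⟩

end
end

section
/- Let G be a torsion-free abelian group of finite rank that is not free but such that every subgroup of G of strictly smaller rank is free. Then every homomorphism from G into an ℵ₁-free abelian group is zero. -/
open scoped TensorProduct
open Cardinal

noncomputable section

/-- An abelian group is `ℵ₁`-free if every countable subgroup is free abelian. -/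
def Aleph1Free (L : Type*) [AddCommGroup L] : Prop :=
  ∀ S : AddSubgroup L, Countable S → Module.Free ℤ S

/-- The rank of a torsion-free abelian group: the dimension of the `ℚ`-vector space
`ℚ ⊗ G`. -/
def rkQ (G : Type*) [AddCommGroup G] : Cardinal :=
  Module.rank ℚ (ℚ ⊗[ℤ] G)

/-!
If `f : G →+ L` is nonzero, its image has rank at most that of `G`; since `ℵ₁`-free groups are
torsion-free, a torsion-free group of finite rank embeds in a finite-dimensional `ℚ`-vector space,
so the image is countable, hence free. Being torsion-free and nonzero, the image has positive rank,
so by additivity of rank the kernel has strictly smaller rank than `G` and is free. As the image is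
free, hence projective, `G ≃ ker f × im f` would be free, a contradiction.
-/

theorem rkQ_eq_rank (M : Type*) [AddCommGroup M] : rkQ M = Module.rank ℤ M :=
  (TensorProduct.isBaseChange ℤ M ℚ).rank_eq

theorem Aleph1Free.isAddTorsionFree {L : Type*} [AddCommGroup L] (hL : Aleph1Free L) :
    IsAddTorsionFree L := by
  rw [← Module.isTorsionFree_int_iff_isAddTorsionFree]
  refine .of_smul_eq_zero fun n x hnx => ?_
  have := hL (AddSubgroup.zmultiples x) inferInstance
  have hn : n • (⟨x, AddSubgroup.mem_zmultiples x⟩ : AddSubgroup.zmultiples x) = 0 :=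
    Subtype.ext hnx
  simpa using smul_eq_zero.mp hn

theorem countable_of_rank_lt_aleph0 {M : Type*} [AddCommGroup M] [IsAddTorsionFree M]
    (h : Module.rank ℤ M < ℵ₀) : Countable M := by
  have : Module.Finite ℚ (ℚ ⊗[ℤ] M) :=
    Module.rank_lt_aleph0_iff.mp (by rwa [← rkQ_eq_rank] at h)
  have : Countable (ℚ ⊗[ℤ] M) := Finsupp.Countable.of_moduleFinite (R := ℚ)
  refine Function.Injective.countable (f := TensorProduct.mk ℤ ℚ M 1) ?_
  exact (IsLocalizedModule.injective_iff_isRegular (nonZeroDivisors ℤ) _).mpr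
    fun c => Module.IsTorsionFree.isSMulRegular (isRegular_iff_mem_nonZeroDivisors.mpr c.2)

theorem Aleph1Free.free_of_rank_lt_aleph0 {L : Type*} [AddCommGroup L] (hL : Aleph1Free L)
    (S : Submodule ℤ L) (hS : Module.rank ℤ S < ℵ₀) : Module.Free ℤ S :=
  have := hL.isAddTorsionFree
  hL S.toAddSubgroup (countable_of_rank_lt_aleph0 hS)

theorem LinearMap.rank_ker_lt_rank_of_ne_zero {R M N : Type*} [CommRing R] [IsDomain R]
    [AddCommGroup M] [Module R M] [AddCommGroup N] [Module R N] [Module.IsTorsionFree R N]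
    {f : M →ₗ[R] N} (hf : f ≠ 0) (hM : Module.rank R M < ℵ₀) :
    Module.rank R (LinearMap.ker f) < Module.rank R M := by
  have hsum := rank_quotient_add_rank_of_isDomain (LinearMap.ker f)
  have : Nontrivial (LinearMap.range f) :=
    Submodule.nontrivial_iff_ne_bot.mpr (mt LinearMap.range_eq_bot.mp hf)
  have hpos : 0 < Module.rank R (M ⧸ LinearMap.ker f) := by
    have hlift := f.quotKerEquivRange.lift_rank_eq
    refine pos_iff_ne_zero.mpr fun h0 => (rank_pos (R := R) (M := LinearMap.range f)).ne' ?_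
    rwa [h0, Cardinal.lift_zero, eq_comm, Cardinal.lift_eq_zero] at hlift
  rw [← hsum] at hM ⊢
  obtain ⟨m, hm⟩ := Cardinal.lt_aleph0.mp (le_self_add.trans_lt hM)
  obtain ⟨n, hn⟩ := Cardinal.lt_aleph0.mp (le_add_self.trans_lt hM)
  rw [hm] at hpos
  rw [hm, hn]
  norm_cast at hpos ⊢
  omega

theorem Module.free_of_free_ker_of_free_range {R M N : Type*} [Ring R] [AddCommGroup M]
    [Module R M] [AddCommGroup N] [Module R N] (f : M →ₗ[R] N)
    [Module.Free R (LinearMap.ker f)] [Module.Free R (LinearMap.range f)] : Module.Free R M := by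
  obtain ⟨s, hs⟩ := Module.projective_lifting_property f.rangeRestrict LinearMap.id
    f.surjective_rangeRestrict
  have hexact : Function.Exact (LinearMap.ker f).subtype f.rangeRestrict := by
    intro x
    simp [Subtype.ext_iff]
  obtain ⟨e, -⟩ := hexact.splitSurjectiveEquiv (LinearMap.ker f).injective_subtype ⟨s, hs⟩
  exact Module.Free.of_equiv e.symm

theorem stmt12_general (G : Type*) [AddCommGroup G]
    (hfinrk : rkQ G < ℵ₀) (hnotfree : ¬ Module.Free ℤ G)
    (hsmall : ∀ G' : AddSubgroup G, rkQ G' < rkQ G → Module.Free ℤ G')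
    (L : Type*) [AddCommGroup L] (hL : Aleph1Free L) (f : G →+ L) :
    f = 0 := by
  by_contra hf
  have := hL.isAddTorsionFree
  let φ := f.toIntLinearMap
  have hφ : φ ≠ 0 := fun h => hf (AddMonoidHom.ext (LinearMap.congr_fun h))
  rw [rkQ_eq_rank] at hfinrk
  have : Module.Free ℤ (LinearMap.range φ) :=
    hL.free_of_rank_lt_aleph0 _ <| Cardinal.lift_lt_aleph0.mp <|
      (lift_rank_range_le φ).trans_lt (Cardinal.lift_lt_aleph0.mpr hfinrk)
  have : Module.Free ℤ (LinearMap.ker φ) :=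
    hsmall (LinearMap.ker φ).toAddSubgroup <| by
      rw [rkQ_eq_rank, rkQ_eq_rank]
      exact LinearMap.rank_ker_lt_rank_of_ne_zero hφ hfinrk
  exact hnotfree (Module.free_of_free_ker_of_free_range φ)

/-- if `G` is a torsion-free abelian group of finite rank which is not free,
but every subgroup of `G` of strictly smaller rank is free, then every homomorphism from
`G` into an `ℵ₁`-free abelian group is zero. -/
theorem stmt12 (G : Type*) [AddCommGroup G] [NoZeroSMulDivisors ℤ G]
    (hfinrk : rkQ G < ℵ₀) (hnotfree : ¬ Module.Free ℤ G)
    (hsmall : ∀ G' : AddSubgroup G, rkQ G' < rkQ G → Module.Free ℤ G')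
    (L : Type*) [AddCommGroup L] (hL : Aleph1Free L) (f : G →+ L) :
    f = 0 :=
  stmt12_general G hfinrk hnotfree hsmall L hL f

end
end
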